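/- arXiv:2602.23076 — 3 statements merged into one kernel-verified Lean document; each statement's English description precedes it below -/
import Mathlib

section
/- Let (x_n) be a sequence in a compact convex set C with diameter Δ, let f have L-Lipschitz gradient, f* = min_C f, and let ρ > 0, σ ∈ [0,1/3), and g_n^{FW} ≥ 0. Suppose that f is nonincreasing along the sequence and that at least half of the indices n ∈ {0,…,N} satisfy either f(x_n) − f(x_{n+1}) ≥ (ρ(1−σ)²/(Δ²L))·(g_n^{FW})² or f(x_n) − f(x_{n+1}) ≥ ((1−3σ)/2)·g_n^{FW}. Then min_{0≤n≤N} g_n^{FW} ≤ max{ sqrt(2Δ²L(f(x_0)−f*)/((N+1)ρ(1−σ)²)), 4(f(x_0)−f*)/((N+1)(1−3σ)) }. -/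
open RealInnerProductSpace

theorem stmt_11 {dim : ℕ} (C : Set (EuclideanSpace ℝ (Fin dim)))
    (hCconv : Convex ℝ C) (hCcomp : IsCompact C)
    (Δ : ℝ) (hΔ : 0 < Δ) (hdiam : ∀ y ∈ C, ∀ z ∈ C, ‖y - z‖ ≤ Δ)
    (f : EuclideanSpace ℝ (Fin dim) → ℝ)
    (gradf : EuclideanSpace ℝ (Fin dim) → EuclideanSpace ℝ (Fin dim))
    (hf : ∀ y, HasGradientAt f (gradf y) y)
    (L : ℝ) (hL : 0 < L)
    (hLip : ∀ y z, ‖gradf y - gradf z‖ ≤ L * ‖y - z‖)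
    (fstar : ℝ) (hfstar : ∀ y ∈ C, fstar ≤ f y)
    (ρ σ : ℝ) (hρ : 0 < ρ) (hσ0 : 0 ≤ σ) (hσ1 : σ < 1 / 3)
    (N : ℕ) (x : ℕ → EuclideanSpace ℝ (Fin dim)) (hxC : ∀ n, x n ∈ C)
    (gFW : ℕ → ℝ) (hgFW : ∀ n, 0 ≤ gFW n)
    (hmono : ∀ n ≤ N, f (x (n + 1)) ≤ f (x n))
    (G : Finset ℕ) (hG : G ⊆ Finset.range (N + 1))
    (hGcard : ((N : ℝ) + 1) / 2 ≤ G.card)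
    (hdec : ∀ n ∈ G,
      f (x n) - f (x (n + 1)) ≥ ρ * (1 - σ) ^ 2 / (Δ ^ 2 * L) * gFW n ^ 2 ∨
      f (x n) - f (x (n + 1)) ≥ (1 - 3 * σ) / 2 * gFW n) :
    ∃ n ≤ N, gFW n ≤
      max (Real.sqrt (2 * Δ ^ 2 * L * (f (x 0) - fstar) / (((N : ℝ) + 1) * ρ * (1 - σ) ^ 2)))
        (4 * (f (x 0) - fstar) / (((N : ℝ) + 1) * (1 - 3 * σ))) := by
  by_contra hcon
  push_neg at hcon
  set D : ℝ := f (x 0) - fstar with hDdef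
  have hD : 0 ≤ D := sub_nonneg.2 (hfstar (x 0) (hxC 0))
  have hN1 : (0:ℝ) < (N:ℝ) + 1 := by positivity
  have hσ' : 0 < 1 - σ := by linarith
  have h3σ : 0 < 1 - 3 * σ := by linarith
  have harg : 0 ≤ 2 * Δ ^ 2 * L * D / (((N : ℝ) + 1) * ρ * (1 - σ) ^ 2) := by positivity
  -- each good step decreases by more than 2D/(N+1)
  have key : ∀ n ∈ G, 2 * D / ((N:ℝ) + 1) < f (x n) - f (x (n + 1)) := by
    intro n hn
    have hnN : n ≤ N := Nat.lt_succ_iff.mp (Finset.mem_range.mp (hG hn))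
    have hB := hcon n hnN
    rcases hdec n hn with h1 | h2
    · have hB1 : Real.sqrt (2 * Δ ^ 2 * L * D / (((N : ℝ) + 1) * ρ * (1 - σ) ^ 2)) < gFW n :=
        lt_of_le_of_lt (le_max_left _ _) hB
      have hsq : 2 * Δ ^ 2 * L * D / (((N : ℝ) + 1) * ρ * (1 - σ) ^ 2) < gFW n ^ 2 := by
        calc 2 * Δ ^ 2 * L * D / (((N : ℝ) + 1) * ρ * (1 - σ) ^ 2)
            = Real.sqrt (2 * Δ ^ 2 * L * D / (((N : ℝ) + 1) * ρ * (1 - σ) ^ 2)) ^ 2 :=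
              (Real.sq_sqrt harg).symm
          _ < gFW n ^ 2 := by
              apply pow_lt_pow_left₀ hB1 (Real.sqrt_nonneg _)
              norm_num
      have hc : 0 < ρ * (1 - σ) ^ 2 / (Δ ^ 2 * L) := by positivity
      have := mul_lt_mul_of_pos_left hsq hc
      have heq : ρ * (1 - σ) ^ 2 / (Δ ^ 2 * L) *
          (2 * Δ ^ 2 * L * D / (((N : ℝ) + 1) * ρ * (1 - σ) ^ 2)) = 2 * D / ((N:ℝ) + 1) := by
        field_simp
      calc 2 * D / ((N:ℝ) + 1)
          = ρ * (1 - σ) ^ 2 / (Δ ^ 2 * L) *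
              (2 * Δ ^ 2 * L * D / (((N : ℝ) + 1) * ρ * (1 - σ) ^ 2)) := heq.symm
        _ < ρ * (1 - σ) ^ 2 / (Δ ^ 2 * L) * gFW n ^ 2 := this
        _ ≤ f (x n) - f (x (n + 1)) := h1
    · have hB2 : 4 * D / (((N : ℝ) + 1) * (1 - 3 * σ)) < gFW n :=
        lt_of_le_of_lt (le_max_right _ _) hB
      have := mul_lt_mul_of_pos_left hB2 (by linarith : (0:ℝ) < (1 - 3 * σ) / 2)
      have heq : (1 - 3 * σ) / 2 * (4 * D / (((N : ℝ) + 1) * (1 - 3 * σ)))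
          = 2 * D / ((N:ℝ) + 1) := by
        field_simp
        ring
      calc 2 * D / ((N:ℝ) + 1)
          = (1 - 3 * σ) / 2 * (4 * D / (((N : ℝ) + 1) * (1 - 3 * σ))) := heq.symm
        _ < (1 - 3 * σ) / 2 * gFW n := this
        _ ≤ f (x n) - f (x (n + 1)) := h2
  -- G is nonempty
  have hGne : G.Nonempty := by
    rw [← Finset.card_pos]
    by_contra h
    push_neg at h
    have hc0 : G.card = 0 := Nat.le_zero.mp h
    rw [hc0] at hGcard
    norm_num at hGcard
    linarith
  -- sum comparison
  have hsum1 : (G.card : ℝ) * (2 * D / ((N:ℝ) + 1)) < ∑ n ∈ G, (f (x n) - f (x (n + 1))) := by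
    have := Finset.sum_lt_sum_of_nonempty hGne key
    simpa using this
  have hsum2 : ∑ n ∈ G, (f (x n) - f (x (n + 1)))
      ≤ ∑ n ∈ Finset.range (N + 1), (f (x n) - f (x (n + 1))) := by
    apply Finset.sum_le_sum_of_subset_of_nonneg hG
    intro n hn _
    have hnN : n ≤ N := Nat.lt_succ_iff.mp (Finset.mem_range.mp hn)
    have := hmono n hnN
    linarith
  have htel : ∑ n ∈ Finset.range (N + 1), (f (x n) - f (x (n + 1))) = f (x 0) - f (x (N + 1)) := by
    have := Finset.sum_range_sub' (fun n => f (x n)) (N + 1)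
    simpa using this
  have hlast : f (x 0) - f (x (N + 1)) ≤ D := by
    have := hfstar (x (N + 1)) (hxC (N + 1))
    simp only [hDdef]
    linarith
  have hcard : D ≤ (G.card : ℝ) * (2 * D / ((N:ℝ) + 1)) := by
    have h2D : 0 ≤ 2 * D / ((N:ℝ) + 1) := by positivity
    have := mul_le_mul_of_nonneg_right hGcard h2D
    calc D = ((N:ℝ) + 1) / 2 * (2 * D / ((N:ℝ) + 1)) := by field_simp
      _ ≤ (G.card : ℝ) * (2 * D / ((N:ℝ) + 1)) := this
  linarith
end

section
/- Let M > 0, Δ > 0, 0 < q < 1, σ > 0, τ > 0, and 0 < ε < 1. If t ≥ (1/(1−ε))·log_q( (στ/((1+σ)ΔM))·(εq·log(1/q))/(1 + 2εq·log(1/q)) ), then M(2q^t + t·q^{t−1})·Δ ≤ (σ/(1+σ))·τ. -/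
open Real

/-- ITD iteration-count bound. Here `t` is the (nonnegative) number of lower-level
iterations and `log_q` is `Real.logb q`. -/
theorem stmt_16 (M Δ q σ τ ε t : ℝ) (hM : 0 < M) (hΔ : 0 < Δ)
    (hq0 : 0 < q) (hq1 : q < 1) (hσ : 0 < σ) (hτ : 0 < τ)
    (hε0 : 0 < ε) (hε1 : ε < 1) (ht0 : 0 ≤ t)
    (ht : t ≥ 1 / (1 - ε) *
      Real.logb q (σ * τ / ((1 + σ) * Δ * M) *
        (ε * q * Real.log (1 / q) / (1 + 2 * ε * q * Real.log (1 / q))))) :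
    M * (2 * q ^ t + t * q ^ (t - 1)) * Δ ≤ σ / (1 + σ) * τ := by
  set c := Real.log (1 / q) with hc
  have hc0 : 0 < c := Real.log_pos (by rw [lt_div_iff₀ hq0]; linarith)
  set A := σ * τ / ((1 + σ) * Δ * M) * (ε * q * c / (1 + 2 * ε * q * c)) with hA
  have hσ1 : (0:ℝ) < 1 + σ := by linarith
  have hden : (0:ℝ) < 1 + 2 * ε * q * c := by positivity
  have hA0 : 0 < A :=
    mul_pos (div_pos (mul_pos hσ hτ) (mul_pos (mul_pos hσ1 hΔ) hM))
      (div_pos (by positivity) hden)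
  have h1ε : 0 < 1 - ε := by linarith
  -- q^((1-ε)t) ≤ A
  have hlb : Real.logb q A ≤ (1 - ε) * t := by
    have h := mul_le_mul_of_nonneg_left ht (le_of_lt h1ε)
    calc Real.logb q A = (1 - ε) * (1 / (1 - ε) * Real.logb q A) := by
          field_simp
      _ ≤ (1 - ε) * t := h
  have key3 : q ^ ((1 - ε) * t) ≤ A := by
    calc q ^ ((1 - ε) * t) ≤ q ^ (Real.logb q A) :=
          Real.rpow_le_rpow_of_exponent_ge hq0 (le_of_lt hq1) hlb
      _ = A := Real.rpow_logb hq0 (ne_of_lt hq1) hA0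
  -- q^(εt) ≤ 1
  have key1 : q ^ (ε * t) ≤ 1 :=
    Real.rpow_le_one (le_of_lt hq0) (le_of_lt hq1) (by positivity)
  -- t * q^(εt) ≤ 1/(ε*c)
  have hexp : q ^ (ε * t) = Real.exp (-(c * (ε * t))) := by
    rw [Real.rpow_def_of_pos hq0]
    congr 1
    have hlq : Real.log q = -c := by rw [hc, one_div, Real.log_inv]; ring
    rw [hlq]; ring
  have h2 : c * (ε * t) * Real.exp (-(c * (ε * t))) ≤ 1 := by
    rw [Real.exp_neg, ← div_eq_mul_inv, div_le_one (Real.exp_pos _)]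
    have := Real.add_one_le_exp (c * (ε * t))
    linarith
  have key2 : t * q ^ (ε * t) ≤ 1 / (ε * c) := by
    rw [hexp, le_div_iff₀ (by positivity : (0:ℝ) < ε * c)]
    calc t * Real.exp (-(c * (ε * t))) * (ε * c)
        = c * (ε * t) * Real.exp (-(c * (ε * t))) := by ring
      _ ≤ 1 := h2
  -- decompose powers
  have e1 : q ^ ((1 - ε) * t) * q ^ (ε * t) = q ^ t := by
    rw [← Real.rpow_add hq0]; congr 1; ring
  have e2 : q ^ ((1 - ε) * t) * q ^ (ε * t) * q⁻¹ = q ^ (t - 1) := by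
    rw [← Real.rpow_neg_one q, ← Real.rpow_add hq0, ← Real.rpow_add hq0]
    congr 1; ring
  have hqet : 0 ≤ q ^ (ε * t) := le_of_lt (Real.rpow_pos_of_pos hq0 _)
  have hinner : 2 * q ^ (ε * t) + t * q ^ (ε * t) * q⁻¹ ≤ 2 + 1 / (ε * c) * q⁻¹ := by
    have h2' : 2 * q ^ (ε * t) ≤ 2 := by linarith
    have h3' : t * q ^ (ε * t) * q⁻¹ ≤ 1 / (ε * c) * q⁻¹ :=
      mul_le_mul_of_nonneg_right key2 (by positivity)
    linarith
  have hinner0 : 0 ≤ 2 * q ^ (ε * t) + t * q ^ (ε * t) * q⁻¹ := by positivity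
  calc M * (2 * q ^ t + t * q ^ (t - 1)) * Δ
      = M * Δ * (q ^ ((1 - ε) * t) * (2 * q ^ (ε * t) + t * q ^ (ε * t) * q⁻¹)) := by
        rw [← e1, ← e2]; ring
    _ ≤ M * Δ * (A * (2 + 1 / (ε * c) * q⁻¹)) := by
        apply mul_le_mul_of_nonneg_left _ (by positivity)
        exact mul_le_mul key3 hinner hinner0 (le_of_lt hA0)
    _ = σ / (1 + σ) * τ := by
        rw [hA]
        field_simp
        ring
end

section
/- Let f have L-Lipschitz gradient on a convex compact set C of diameter Δ, let σ ∈ [0,1/3), ρ > 0, τ > 0, and suppose along iterates (x_n) with directions (d_n) the conditions of the inexact vanilla Frank–Wolfe analysis hold (inexactness bound, stepsize lower bound η_n ≥ min{1, g̃_n/(L‖d_n‖²)}, and sufficient decrease f(x_n) − f(x_{n+1}) ≥ ρ·min{1, g̃_n/(L‖d_n‖²)}·g̃_n). If N + 1 ≥ ⌈max{ Δ²L(f(x_0)−f*)(1+σ)²/(τ²ρ(1−σ)²), 2(f(x_0)−f*)(1+σ)/(τ(1−3σ)) }⌉, then there exists n ∈ {0,…,N} with g̃_n ≤ τ, and moreover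 min_{0≤i≤N} g_i^{FW} ≤ τ/(1+σ). -/
/-!
Put `ε = στ/(1+σ)` and `τ' = τ(1-σ)/(1+σ)`, so that `ε + τ' = τ/(1+σ)`. While the inexact gap
`γ = -⟪g̃(xₙ), dₙ⟫` exceeds `τ'`, every step decreases `f` by at least `min (ρτ'²/(LΔ²)) (τ'/2 - ε)`:
a short step (`γ < L‖dₙ‖²`) by the sufficient-decrease condition and `‖dₙ‖ ≤ Δ`; a full step
(stepsize `1`, the LMO forbids more) by the descent lemma and the inexactness bound. Summing, these
decreases would exceed `f(x₀) - f*` within `N + 1` steps, so some `γₙ ≤ τ'`. At that step the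
inexactness bound transfers the gap to the exact gradient at the cost of `ε`.
-/

open RealInnerProductSpace

section

variable {E : Type*} [NormedAddCommGroup E] [InnerProductSpace ℝ E] [CompleteSpace E]
  {f : E → ℝ} {gradf : E → E} {L : ℝ}

theorem image_add_le_of_lipschitz_gradient (hf : ∀ y, HasGradientAt f (gradf y) y)
    (hLip : ∀ y z, ‖gradf y - gradf z‖ ≤ L * ‖y - z‖) (a v : E) :
    f (a + v) ≤ f a + ⟪gradf a, v⟫ + L / 2 * ‖v‖ ^ 2 := by
  set ψ : ℝ → ℝ := fun t => f (a + t • v) - t * ⟪gradf a, v⟫ - L / 2 * t ^ 2 * ‖v‖ ^ 2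
  have hψ : ∀ t : ℝ, HasDerivAt ψ (⟪gradf (a + t • v) - gradf a, v⟫ - L * t * ‖v‖ ^ 2) t := by
    intro t
    have hline : HasDerivAt (fun t : ℝ => a + t • v) v t := by
      simpa using ((hasDerivAt_id t).smul_const v).const_add a
    have hfline := (hf (a + t • v)).hasFDerivAt.comp_hasDerivAt t hline
    rw [InnerProductSpace.toDual_apply_apply] at hfline
    refine ((hfline.sub ((hasDerivAt_id t).mul_const ⟪gradf a, v⟫)).sub
      (((hasDerivAt_pow 2 t).const_mul (L / 2)).mul_const (‖v‖ ^ 2))).congr_deriv ?_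
    rw [inner_sub_left]
    push_cast
    ring
  have hanti : AntitoneOn ψ (Set.Icc 0 1) := by
    refine antitoneOn_of_hasDerivWithinAt_nonpos (convex_Icc 0 1)
      (fun t _ => (hψ t).continuousAt.continuousWithinAt)
      (fun t _ => (hψ t).hasDerivWithinAt) fun t ht => ?_
    rw [interior_Icc] at ht
    have hlip : ‖gradf (a + t • v) - gradf a‖ ≤ L * (t * ‖v‖) := by
      simpa [norm_smul, abs_of_pos ht.1] using hLip (a + t • v) a
    calc ⟪gradf (a + t • v) - gradf a, v⟫ - L * t * ‖v‖ ^ 2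
        ≤ ‖gradf (a + t • v) - gradf a‖ * ‖v‖ - L * t * ‖v‖ ^ 2 := by
          gcongr; exact real_inner_le_norm _ _
      _ ≤ L * (t * ‖v‖) * ‖v‖ - L * t * ‖v‖ ^ 2 := by gcongr
      _ = 0 := by ring
  have hψ01 := hanti (Set.left_mem_Icc.2 zero_le_one) (Set.right_mem_Icc.2 zero_le_one) zero_le_one
  simp only [ψ, zero_smul, one_smul, add_zero] at hψ01
  linarith

end

theorem mul_lt_sub_of_forall_lt_sub_succ {u : ℕ → ℝ} {m : ℝ} :
    ∀ {N : ℕ}, (∀ n ≤ N, m < u n - u (n + 1)) → (N + 1) * m < u 0 - u (N + 1)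
  | 0, h => by simpa using h 0 le_rfl
  | N + 1, h => by
    have ih := mul_lt_sub_of_forall_lt_sub_succ fun n hn => h n (Nat.le_succ_of_le hn)
    have hlast := h (N + 1) le_rfl
    push_cast
    linarith

theorem le_mul_min_of_div_le {F M q c : ℝ} (hq : 0 < q) (hc : 0 < c)
    (hFq : F / q ≤ M) (hFc : F / c ≤ M) : F ≤ M * min q c := by
  rcases min_cases q c with ⟨hmin, -⟩ | ⟨hmin, -⟩ <;> rw [hmin]
  · exact (div_le_iff₀ hq).mp hFq
  · exact (div_le_iff₀ hc).mp hFc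

namespace FrankWolfe

variable {E : Type*} [NormedAddCommGroup E] [InnerProductSpace ℝ E]

theorem stepsize_le_one {g d : E} {η : ℝ} (hgap : 0 < -⟪g, d⟫) (hopt : ⟪g, d⟫ ≤ ⟪g, η • d⟫) :
    η ≤ 1 := by
  rw [real_inner_smul_right] at hopt
  nlinarith

theorem exact_gap_le_inexact_gap_add {gradx g xhat x y : E} {ε : ℝ}
    (hopt : ⟪g, xhat - x⟫ ≤ ⟪g, y - x⟫) (hinexact : |⟪gradx - g, y - x⟫| ≤ ε) :
    -⟪gradx, y - x⟫ ≤ ε + -⟪g, xhat - x⟫ := by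
  rw [inner_sub_left] at hinexact
  linarith [(abs_le.mp hinexact).1]

variable [CompleteSpace E] {f : E → ℝ} {gradf : E → E} {L : ℝ}

theorem sub_image_add_ge_of_full_step (hf : ∀ y, HasGradientAt f (gradf y) y)
    (hLip : ∀ y z, ‖gradf y - gradf z‖ ≤ L * ‖y - z‖) {x g d : E} {ε : ℝ}
    (hinexact : ⟪gradf x - g, d⟫ ≤ ε) (hfull : L * ‖d‖ ^ 2 ≤ -⟪g, d⟫) :
    -⟪g, d⟫ / 2 - ε ≤ f x - f (x + d) := by
  have hdescent := image_add_le_of_lipschitz_gradient hf hLip x d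
  rw [inner_sub_left] at hinexact
  linarith

theorem min_lt_sub_image_of_lt_gap (hf : ∀ y, HasGradientAt f (gradf y) y)
    (hLip : ∀ y z, ‖gradf y - gradf z‖ ≤ L * ‖y - z‖) (hL : 0 < L) {ρ : ℝ} (hρ : 0 < ρ)
    {x x' g d : E} {η Δ ε τ : ℝ} (hτ : 0 < τ) (hgap : τ < -⟪g, d⟫) (hdΔ : ‖d‖ ≤ Δ)
    (hinexact : ⟪gradf x - g, d⟫ ≤ ε) (hupdate : x' = x + η • d)
    (hopt : ⟪g, d⟫ ≤ ⟪g, x' - x⟫)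
    (hstep : min 1 (-⟪g, d⟫ / (L * ‖d‖ ^ 2)) ≤ η)
    (hdec : ρ * min 1 (-⟪g, d⟫ / (L * ‖d‖ ^ 2)) * -⟪g, d⟫ ≤ f x - f x') :
    min (ρ * τ ^ 2 / (L * Δ ^ 2)) (τ / 2 - ε) < f x - f x' := by
  set γ := -⟪g, d⟫
  have hd : 0 < ‖d‖ := norm_pos_iff.mpr fun hd0 => by simp [γ, hd0] at hgap; linarith
  have hLd : 0 < L * ‖d‖ ^ 2 := by positivity
  rcases le_or_gt 1 (γ / (L * ‖d‖ ^ 2)) with hfull | hshort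
  · have hη : η = 1 := by
      refine le_antisymm (stepsize_le_one (hτ.trans hgap) ?_) (min_eq_left hfull ▸ hstep)
      rwa [hupdate, add_sub_cancel_left] at hopt
    have hfull' : L * ‖d‖ ^ 2 ≤ γ := (one_le_div hLd).mp hfull
    have hdrop := sub_image_add_ge_of_full_step hf hLip hinexact hfull'
    rw [hupdate, hη, one_smul]
    exact (min_le_right _ _).trans_lt (by linarith)
  · rw [min_eq_right hshort.le] at hdec
    refine (min_le_left _ _).trans_lt (lt_of_lt_of_le ?_ hdec)
    calc ρ * τ ^ 2 / (L * Δ ^ 2) ≤ ρ * τ ^ 2 / (L * ‖d‖ ^ 2) := by gcongr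
      _ < ρ * γ ^ 2 / (L * ‖d‖ ^ 2) := by gcongr
      _ = ρ * (γ / (L * ‖d‖ ^ 2)) * γ := by ring

end FrankWolfe

theorem stmt_18_general {dim : ℕ} (C : Set (EuclideanSpace ℝ (Fin dim)))
    (Δ : ℝ) (hΔ : 0 < Δ) (hdiam : ∀ y ∈ C, ∀ z ∈ C, ‖y - z‖ ≤ Δ)
    (f : EuclideanSpace ℝ (Fin dim) → ℝ)
    (gradf gtil : EuclideanSpace ℝ (Fin dim) → EuclideanSpace ℝ (Fin dim))
    (hf : ∀ y, HasGradientAt f (gradf y) y)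
    (L : ℝ) (hL : 0 < L)
    (hLip : ∀ y z, ‖gradf y - gradf z‖ ≤ L * ‖y - z‖)
    (σ τ ρ : ℝ) (hσ0 : 0 ≤ σ) (hσ1 : σ < 1 / 3) (hτ : 0 < τ) (hρ : 0 < ρ)
    (hinexact : ∀ x ∈ C, ∀ xb ∈ C,
      |⟪gradf xb - gtil xb, x - xb⟫| ≤ σ / (1 + σ) * τ)
    (fstar : ℝ) (hfstar : ∀ y ∈ C, fstar ≤ f y)
    (x xhat d : ℕ → EuclideanSpace ℝ (Fin dim)) (η : ℕ → ℝ)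
    (hxC : ∀ n, x n ∈ C) (hxhatC : ∀ n, xhat n ∈ C)
    (hlmo : ∀ n, ∀ z ∈ C, ⟪gtil (x n), xhat n - x n⟫ ≤ ⟪gtil (x n), z - x n⟫)
    (hd : ∀ n, d n = xhat n - x n)
    (hupdate : ∀ n, x (n + 1) = x n + η n • d n)
    (hstep : ∀ n, η n ≥ min 1 ((-⟪gtil (x n), d n⟫) / (L * ‖d n‖ ^ 2)))
    (hdec : ∀ n, f (x n) - f (x (n + 1)) ≥
      ρ * min 1 ((-⟪gtil (x n), d n⟫) / (L * ‖d n‖ ^ 2)) * (-⟪gtil (x n), d n⟫))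
    (y : ℕ → EuclideanSpace ℝ (Fin dim)) (hyC : ∀ i, y i ∈ C)
    (N : ℕ)
    (hN : (N : ℝ) + 1 ≥
      (⌈max (Δ ^ 2 * L * (f (x 0) - fstar) * (1 + σ) ^ 2 / (τ ^ 2 * ρ * (1 - σ) ^ 2))
          (2 * (f (x 0) - fstar) * (1 + σ) / (τ * (1 - 3 * σ)))⌉ : ℤ)) :
    (∃ n ≤ N, -⟪gtil (x n), d n⟫ ≤ τ) ∧
    (∃ i ≤ N, -⟪gradf (x i), y i - x i⟫ ≤ τ / (1 + σ)) := by
  have hσ : 0 < 1 + σ := by linarith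
  have hσ' : 0 < 1 - σ := by linarith
  have hσ'' : 0 < 1 - 3 * σ := by linarith
  set ε := σ / (1 + σ) * τ with hε
  set τ' := τ * (1 - σ) / (1 + σ) with hτ'
  have hc : τ' / 2 - ε = τ * (1 - 3 * σ) / (2 * (1 + σ)) := by rw [hε, hτ']; field_simp; ring
  have hgap : ∃ n ≤ N, -⟪gtil (x n), d n⟫ ≤ τ' := by
    by_contra! hcon
    have hdescent : ∀ n ≤ N,
        min (ρ * τ' ^ 2 / (L * Δ ^ 2)) (τ' / 2 - ε) < f (x n) - f (x (n + 1)) := fun n hn =>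
      FrankWolfe.min_lt_sub_image_of_lt_gap hf hLip hL hρ (by positivity) (hcon n hn)
        (hd n ▸ hdiam _ (hxhatC n) _ (hxC n))
        (hd n ▸ (abs_le.mp (hinexact _ (hxhatC n) _ (hxC n))).2) (hupdate n)
        (hd n ▸ hlmo n _ (hxC (n + 1))) (hstep n) (hdec n)
    have hF : f (x 0) - fstar ≤ (N + 1) * min (ρ * τ' ^ 2 / (L * Δ ^ 2)) (τ' / 2 - ε) := by
      have hceil := (Int.le_ceil _).trans hN
      exact le_mul_min_of_div_le (by positivity) (by rw [hc]; positivity)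
        ((Eq.le (by rw [hτ']; field_simp)).trans ((le_max_left _ _).trans hceil))
        ((Eq.le (by rw [hc]; field_simp)).trans ((le_max_right _ _).trans hceil))
    linarith [mul_lt_sub_of_forall_lt_sub_succ hdescent, hfstar _ (hxC (N + 1))]
  obtain ⟨n, hn, hgap⟩ := hgap
  refine ⟨⟨n, hn, hgap.trans ?_⟩, ⟨n, hn, ?_⟩⟩
  · rw [hτ', div_le_iff₀ hσ]; nlinarith
  · have hexact := FrankWolfe.exact_gap_le_inexact_gap_add (hlmo n _ (hyC n))
      (hinexact _ (hyC n) _ (hxC n))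
    calc -⟪gradf (x n), y n - x n⟫ ≤ ε + τ' := by rw [hd n] at hgap; linarith
      _ = τ / (1 + σ) := by rw [hε, hτ']; field_simp; ring

/-- Iteration complexity of the inexact vanilla Frank–Wolfe algorithm.
`x n` are the iterates, `d n = x̂ n − x n` the inexact FW directions (with
`x̂ n` a minimizer of the linearized surrogate `⟪g̃(x n), ·⟫` over `C`), and
`y i` exact FW vertices giving the exact gap `−⟪∇f(x i), y i − x i⟫`. -/
theorem stmt_18 {dim : ℕ} (C : Set (EuclideanSpace ℝ (Fin dim)))
    (hCconv : Convex ℝ C) (hCcomp : IsCompact C)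
    (Δ : ℝ) (hΔ : 0 < Δ) (hdiam : ∀ y ∈ C, ∀ z ∈ C, ‖y - z‖ ≤ Δ)
    (f : EuclideanSpace ℝ (Fin dim) → ℝ)
    (gradf gtil : EuclideanSpace ℝ (Fin dim) → EuclideanSpace ℝ (Fin dim))
    (hf : ∀ y, HasGradientAt f (gradf y) y)
    (L : ℝ) (hL : 0 < L)
    (hLip : ∀ y z, ‖gradf y - gradf z‖ ≤ L * ‖y - z‖)
    (σ τ ρ : ℝ) (hσ0 : 0 ≤ σ) (hσ1 : σ < 1 / 3) (hτ : 0 < τ) (hρ : 0 < ρ)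
    (hinexact : ∀ x ∈ C, ∀ xb ∈ C,
      |⟪gradf xb - gtil xb, x - xb⟫| ≤ σ / (1 + σ) * τ)
    (fstar : ℝ) (hfstar : ∀ y ∈ C, fstar ≤ f y)
    (x xhat d : ℕ → EuclideanSpace ℝ (Fin dim)) (η : ℕ → ℝ)
    (hxC : ∀ n, x n ∈ C) (hxhatC : ∀ n, xhat n ∈ C)
    (hlmo : ∀ n, ∀ z ∈ C, ⟪gtil (x n), xhat n - x n⟫ ≤ ⟪gtil (x n), z - x n⟫)
    (hd : ∀ n, d n = xhat n - x n)
    (hupdate : ∀ n, x (n + 1) = x n + η n • d n)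
    (hstep : ∀ n, η n ≥ min 1 ((-⟪gtil (x n), d n⟫) / (L * ‖d n‖ ^ 2)))
    (hdec : ∀ n, f (x n) - f (x (n + 1)) ≥
      ρ * min 1 ((-⟪gtil (x n), d n⟫) / (L * ‖d n‖ ^ 2)) * (-⟪gtil (x n), d n⟫))
    (y : ℕ → EuclideanSpace ℝ (Fin dim)) (hyC : ∀ i, y i ∈ C)
    (hyFW : ∀ i, ∀ z ∈ C, ⟪gradf (x i), y i - x i⟫ ≤ ⟪gradf (x i), z - x i⟫)
    (N : ℕ)
    (hN : (N : ℝ) + 1 ≥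
      (⌈max (Δ ^ 2 * L * (f (x 0) - fstar) * (1 + σ) ^ 2 / (τ ^ 2 * ρ * (1 - σ) ^ 2))
          (2 * (f (x 0) - fstar) * (1 + σ) / (τ * (1 - 3 * σ)))⌉ : ℤ)) :
    (∃ n ≤ N, -⟪gtil (x n), d n⟫ ≤ τ) ∧
    (∃ i ≤ N, -⟪gradf (x i), y i - x i⟫ ≤ τ / (1 + σ)) :=
  stmt_18_general C Δ hΔ hdiam f gradf gtil hf L hL hLip σ τ ρ hσ0 hσ1 hτ hρ hinexact fstar hfstar x
    xhat d η hxC hxhatC hlmo hd hupdate hstep hdec y hyC N hN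
end
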